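/- No two distinct alphabetic formulas are unifiable: if A and B are 𝒜-formulas with A ≠ B, then there are no substitutions σ, τ with σA = τB. -/

import Mathlib

namespace PC

/-- `{→}`-formulas over a countably infinite set of propositional variables. -/
inductive Fml : Type where
  | var : ℕ → Fml
  | imp : Fml → Fml → Fml
deriving DecidableEq

namespace Fml

/-- Application of a substitution to a formula. -/
def subst (σ : ℕ → Fml) : Fml → Fml
  | var n => σ n
  | imp A B => imp (subst σ A) (subst σ B)

/-- The set of variables of a formula. -/
def fvars : Fml → Finset ℕ
  | var n => {n}
  | imp A B => fvars A ∪ fvars B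

/-- Derivability from a set of axioms by modus ponens and substitution. -/
inductive Deriv (P : Set Fml) : Fml → Prop
  | ax {A : Fml} : A ∈ P → Deriv P A
  | mp {A B : Fml} : Deriv P A → Deriv P (imp A B) → Deriv P B
  | sub {A : Fml} (σ : ℕ → Fml) : Deriv P A → Deriv P (subst σ A)

end Fml

/-- `B̂`: the result of substituting `B` for the variable `x` (= `var 0`) in `x̂`. -/
def hat (xhat B : Fml) : Fml := Fml.subst (fun n => if n = 0 then B else Fml.var n) xhat

/-- `A ∘ B := ((B̂ → B̂) → B̂) → (Â → ((B̂ → B̂) → B̂))`. -/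
def circ (xhat A B : Fml) : Fml :=
  .imp (.imp (.imp (hat xhat B) (hat xhat B)) (hat xhat B))
    (.imp (hat xhat A) (.imp (.imp (hat xhat B) (hat xhat B)) (hat xhat B)))

/-- `A · B := ((A → A) → A) ∘ B`. -/
def dot (xhat A B : Fml) : Fml := circ xhat (.imp (.imp A A) A) B

/-- `Cform i` is the formula `p → (p → … (p → p))` with `i` antecedents `p`,
where `p := var 0`. -/
def Cform : ℕ → Fml
  | 0 => .var 0
  | n + 1 => .imp (.var 0) (Cform n)

/-- The code of the letter `aᵢ` (letters of the alphabet `𝒜 = {a₁, …, a_m}` are the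
elements of `Fin m`, the letter `a : Fin m` standing for `a_{a+1}`): `Cᵢ ∘ p`. -/
def letterCode (xhat : Fml) {m : ℕ} (a : Fin m) : Fml :=
  circ xhat (Cform (a.val + 1)) (.var 0)

/-- Formal alphabetic-formula trees over the alphabet `Fin m`. -/
inductive ATree (m : ℕ) : Type where
  | leaf : Fin m → ATree m
  | node : ATree m → ATree m → ATree m

/-- The word associated with an alphabetic formula. -/
def ATree.word {m : ℕ} : ATree m → List (Fin m)
  | .leaf a => [a]
  | .node l r => l.word ++ r.word

/-- The `{→}`-formula denoted by an alphabetic-formula tree. -/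
def ATree.toFml {m : ℕ} (xhat : Fml) : ATree m → Fml
  | .leaf a => letterCode xhat a
  | .node l r => dot xhat (l.toFml xhat) (r.toFml xhat)

/-- `A` is an alphabetic formula (an `𝒜`-formula). -/
def IsAForm (m : ℕ) (xhat : Fml) (A : Fml) : Prop := ∃ t : ATree m, t.toFml xhat = A

/-- The code `͞α` of a word `α`: the set of all `𝒜`-formulas `A` with `word(A) = α`. -/
def codeSet {m : ℕ} (xhat : Fml) (α : List (Fin m)) : Set Fml :=
  { A | ∃ t : ATree m, t.word = α ∧ t.toFml xhat = A }

/-- `A*`: the set of substitution instances of `A`. -/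
def Inst (A : Fml) : Set Fml := { B | ∃ σ, Fml.subst σ A = B }

/-- `M*`: the set of substitution instances of members of `M`. -/
def InstSet (M : Set Fml) : Set Fml := { B | ∃ A ∈ M, ∃ σ, Fml.subst σ A = B }

/-- A tag system over the alphabet `Fin m`: the words `ω₁, …, ω_m` and the
deletion number `d`. -/
structure TagSystem (m : ℕ) where
  W : Fin m → List (Fin m)
  d : ℕ

/-- One-step production: `ξ ↦_T ζ` iff `ξ = aᵢβγ` with `|β| = d − 1` and `ζ = γωᵢ`. -/
def TagStep {m : ℕ} (T : TagSystem m) (ξ ζ : List (Fin m)) : Prop :=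
  ∃ (i : Fin m) (β γ : List (Fin m)),
    β.length = T.d - 1 ∧ ξ = i :: (β ++ γ) ∧ ζ = γ ++ T.W i

/-- `ξ ⟾_T ζ`: reflexive-transitive closure of one-step production. -/
def TagProd {m : ℕ} (T : TagSystem m) : List (Fin m) → List (Fin m) → Prop :=
  Relation.ReflTransGen (TagStep T)

/-- `T` halts on `ξ`. -/
def TagHalts {m : ℕ} (T : TagSystem m) (ξ : List (Fin m)) : Prop :=
  ∃ ζ, TagProd T ξ ζ ∧ ζ.length < T.d

/-- The variables `x, y, z, u` used in the axiom schemes. -/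
def Xv : Fml := .var 1
def Yv : Fml := .var 2
def Zv : Fml := .var 3
def Uv : Fml := .var 4

/-- The axioms (R₁)–(R₄). -/
def Raxioms (xhat : Fml) : Set Fml :=
  { .imp (dot xhat Xv (dot xhat Yv Zv)) (dot xhat (dot xhat Xv Yv) Zv),
    .imp (dot xhat (dot xhat Xv Yv) Zv) (dot xhat Xv (dot xhat Yv Zv)),
    .imp (dot xhat (dot xhat Xv (dot xhat Yv Zv)) Uv)
      (dot xhat (dot xhat (dot xhat Xv Yv) Zv) Uv),
    .imp (dot xhat (dot xhat (dot xhat Xv Yv) Zv) Uv)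
      (dot xhat (dot xhat Xv (dot xhat Yv Zv)) Uv) }

/-- The axioms (T₁) and (T₂) of `P_T`. -/
def Taxioms {m : ℕ} (xhat : Fml) (T : TagSystem m) : Set Fml :=
  { F | ∃ (i : Fin m) (α : List (Fin m)) (A B : Fml),
      α.length = T.d - 1 ∧ A ∈ codeSet xhat (i :: α) ∧ B ∈ codeSet xhat (T.W i) ∧
      (F = .imp (dot xhat A Xv) (dot xhat Xv B) ∨ F = .imp A B) }

/-- The calculus `P_T`. -/
def PT {m : ℕ} (xhat : Fml) (T : TagSystem m) : Set Fml := Taxioms xhat T ∪ Raxioms xhat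

/-- `P ⊢ A ⇒ B`: there are `C₀ = A, …, C_n = B` with `P ⊢ Cᵢ → Cᵢ₊₁` for all `i`. -/
def DChain (P : Set Fml) : Fml → Fml → Prop :=
  Relation.ReflTransGen (fun C D => Fml.Deriv P (.imp C D))

/-- `T_α`: the set of `𝒜`-formulas `A` with `α ⟾_T word(A)`. -/
def Tset {m : ℕ} (xhat : Fml) (T : TagSystem m) (α : List (Fin m)) : Set Fml :=
  { A | ∃ t : ATree m, t.toFml xhat = A ∧ TagProd T α t.word }

/-- The halting-condition axioms (H) for the calculus `P₀`. -/
def Haxioms {m : ℕ} (xhat : Fml) (T : TagSystem m) (P₀ : Finset Fml) : Set Fml :=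
  { F | ∃ (α : List (Fin m)) (A B : Fml), α ≠ [] ∧ α.length < T.d ∧
      A ∈ codeSet xhat α ∧ B ∈ P₀ ∧ F = .imp A B }

/-- The calculus `P_{T,P₀}`. -/
def PTP0 {m : ℕ} (xhat : Fml) (T : TagSystem m) (P₀ : Finset Fml) : Set Fml :=
  PT xhat T ∪ Haxioms xhat T P₀

/-- The calculus `P_{T,P₀,ξ}`. -/
def PTP0xi {m : ℕ} (xhat : Fml) (T : TagSystem m) (P₀ : Finset Fml)
    (ξ : List (Fin m)) : Set Fml :=
  PT xhat T ∪ Haxioms xhat T P₀ ∪ codeSet xhat ξ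

/-- `⟨P⟩`: formulas obtained from `P` by one application of modus ponens or
substitution. -/
def stepOnce (P : Set Fml) : Set Fml :=
  { B | ∃ A, A ∈ P ∧ Fml.imp A B ∈ P } ∪ { B | ∃ A ∈ P, ∃ σ, Fml.subst σ A = B }

/-- `⟨P⟩_n`. -/
def stepIter (P : Set Fml) : ℕ → Set Fml
  | 0 => P
  | n + 1 => stepOnce (stepIter P n)

/-- The single axiom `x → (y → x)`. -/
def Kax : Fml := .imp (.var 0) (.imp (.var 1) (.var 0))

/-- An effective encoding of `{→}`-formulas as natural numbers. -/
def encFml : Fml → ℕ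
  | .var n => Nat.pair 0 n
  | .imp A B => Nat.pair 1 (Nat.pair (encFml A) (encFml B))

/-- The fixed effective encoding of `{→}`-calculi (finite sets of formulas)
as natural numbers. -/
def encCalc (P : Finset Fml) : ℕ :=
  Encodable.encode ((P.image encFml).sort (· ≤ ·))


/-! The connective `∘` is injective and, since `x̂` has `x` as its only variable, commutes with
substitutions; hence so does `·`. A substitution instance of a letter code is
`(q → (q → … (q → q))) ∘ q`, which can be neither an instance of another letter code (count
the `q`s) nor of a product `((D → D) → D) ∘ E` (then `q = D → D` would be a proper subformula
of `D`). Induction on the formation of alphabetic formulas now shows that a common instance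
`σA = τB` forces `A = B`. -/

namespace Fml

theorem subst_subst (σ τ : ℕ → Fml) (A : Fml) :
    (A.subst τ).subst σ = A.subst fun n => (τ n).subst σ := by
  induction A with
  | var n => rfl
  | imp A B ihA ihB => simp only [subst, ihA, ihB]

theorem subst_eq_subst_iff {σ τ : ℕ → Fml} {A : Fml} :
    A.subst σ = A.subst τ ↔ ∀ n ∈ A.fvars, σ n = τ n := by
  induction A with
  | var n => simp [subst, fvars]
  | imp A B ihA ihB =>
    simp only [subst, imp.injEq, ihA, ihB, fvars, Finset.forall_mem_union]

theorem subst_iterate_imp (σ : ℕ → Fml) (q x : Fml) (n : ℕ) :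
    ((imp q)^[n] x).subst σ = (imp (q.subst σ))^[n] (x.subst σ) :=
  Function.Semiconj.iterate_right (f := subst σ) (ga := imp q) (gb := imp (q.subst σ))
    (fun _ => rfl) n x

theorem sizeOf_iterate_imp (q x : Fml) (n : ℕ) :
    sizeOf ((imp q)^[n] x) = n * (sizeOf q + 1) + sizeOf x := by
  induction n with
  | zero => simp
  | succ n ih =>
    rw [Function.iterate_succ_apply', imp.sizeOf_spec, ih]
    ring

theorem iterate_imp_self_injective (q : Fml) : Function.Injective fun n => (imp q)^[n] q := by
  intro n k h
  have := congrArg sizeOf h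
  simp only [sizeOf_iterate_imp, add_left_inj] at this
  exact Nat.eq_of_mul_eq_mul_right (Nat.succ_pos _) this

end Fml

open Fml

variable {xhat : Fml}

theorem hat_injective (hx : 0 ∈ xhat.fvars) : Function.Injective (hat xhat) := fun B C h => by
  simpa using subst_eq_subst_iff.mp h 0 hx

theorem subst_hat (hx : xhat.fvars ⊆ {0}) (σ : ℕ → Fml) (B : Fml) :
    (hat xhat B).subst σ = hat xhat (B.subst σ) := by
  rw [hat, hat, subst_subst, subst_eq_subst_iff]
  intro n hn
  obtain rfl : n = 0 := Finset.mem_singleton.mp (hx hn)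
  rfl

theorem circ_inj (hx : 0 ∈ xhat.fvars) {A B A' B' : Fml} :
    circ xhat A B = circ xhat A' B' ↔ A = A' ∧ B = B' := by
  refine ⟨fun h => ?_, fun ⟨hA, hB⟩ => hA ▸ hB ▸ rfl⟩
  simp only [circ, imp.injEq] at h
  exact ⟨hat_injective hx h.2.1, hat_injective hx h.1.2⟩

theorem dot_inj (hx : 0 ∈ xhat.fvars) {A B A' B' : Fml} :
    dot xhat A B = dot xhat A' B' ↔ A = A' ∧ B = B' := by
  simp only [dot, circ_inj hx, imp.injEq, and_self]

theorem subst_circ (hx : xhat.fvars ⊆ {0}) (σ : ℕ → Fml) (A B : Fml) :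
    (circ xhat A B).subst σ = circ xhat (A.subst σ) (B.subst σ) := by
  simp only [circ, subst, subst_hat hx]

theorem subst_dot (hx : xhat.fvars ⊆ {0}) (σ : ℕ → Fml) (A B : Fml) :
    (dot xhat A B).subst σ = dot xhat (A.subst σ) (B.subst σ) :=
  subst_circ hx σ _ B

theorem Cform_eq_iterate (n : ℕ) : Cform n = (imp (var 0))^[n] (var 0) := by
  induction n with
  | zero => rfl
  | succ n ih => rw [Function.iterate_succ_apply', ← ih, Cform]

theorem subst_letterCode (hx : xhat.fvars ⊆ {0}) {m : ℕ} (σ : ℕ → Fml) (a : Fin m) :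
    (letterCode xhat a).subst σ = circ xhat ((imp (σ 0))^[a.val + 1] (σ 0)) (σ 0) := by
  rw [letterCode, subst_circ hx, Cform_eq_iterate, subst_iterate_imp]
  rfl

theorem subst_letterCode_inj (hx : xhat.fvars = {0}) {m : ℕ} {σ τ : ℕ → Fml} {a b : Fin m}
    (h : (letterCode xhat a).subst σ = (letterCode xhat b).subst τ) : a = b := by
  rw [subst_letterCode hx.subset, subst_letterCode hx.subset, circ_inj (by simp [hx])] at h
  obtain ⟨hcode, hq⟩ := h
  rw [hq] at hcode
  exact Fin.ext (Nat.succ_injective (iterate_imp_self_injective (τ 0) hcode))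

theorem subst_letterCode_ne_dot (hx : xhat.fvars = {0}) {m : ℕ} (σ : ℕ → Fml) (a : Fin m)
    (D E : Fml) : (letterCode xhat a).subst σ ≠ dot xhat D E := by
  rw [subst_letterCode hx.subset, dot, Function.iterate_succ_apply', Ne, circ_inj (by simp [hx])]
  rintro ⟨hcode, -⟩
  obtain ⟨hq, rfl⟩ := imp.inj hcode
  have := congrArg sizeOf hq
  simp only [sizeOf_iterate_imp, imp.sizeOf_spec] at this
  omega

theorem ATree.eq_of_subst_toFml_eq (hx : xhat.fvars = {0}) {m : ℕ} :
    ∀ {t s : ATree m} {σ τ : ℕ → Fml},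
      (t.toFml xhat).subst σ = (s.toFml xhat).subst τ → t = s
  | .leaf _, .leaf _, _, _, h => congrArg _ (subst_letterCode_inj hx h)
  | .leaf a, .node _ _, σ, τ, h => absurd (h.trans (subst_dot hx.subset τ _ _))
      (subst_letterCode_ne_dot hx σ a _ _)
  | .node _ _, .leaf b, σ, τ, h => absurd (h.symm.trans (subst_dot hx.subset σ _ _))
      (subst_letterCode_ne_dot hx τ b _ _)
  | .node _ _, .node _ _, σ, τ, h => by
    rw [toFml, toFml, subst_dot hx.subset, subst_dot hx.subset, dot_inj (by simp [hx])] at h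
    rw [eq_of_subst_toFml_eq hx h.1, eq_of_subst_toFml_eq hx h.2]

/-- No two distinct alphabetic formulas are unifiable: if `A` and
`B` are `𝒜`-formulas with `A ≠ B`, then there are no substitutions `σ, τ` with
`σA = τB`. -/
theorem aforms_not_unifiable (xhat : Fml) (hx : xhat.fvars = {0})
    (m : ℕ) (A B : Fml) (hA : IsAForm m xhat A) (hB : IsAForm m xhat B)
    (hne : A ≠ B) :
    ¬ ∃ σ τ : ℕ → Fml, Fml.subst σ A = Fml.subst τ B := by
  rintro ⟨σ, τ, h⟩
  obtain ⟨t, rfl⟩ := hA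
  obtain ⟨s, rfl⟩ := hB
  exact hne (congrArg _ (ATree.eq_of_subst_toFml_eq hx h))

end PC
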